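/- arXiv:2107.07673 — 4 statements merged into one kernel-verified Lean document; each statement's English description precedes it below -/
import Mathlib

section
/- Let V be a real Hilbert space, a : V × V → ℝ a continuous coercive bilinear form, B : V → V a monotone, bounded, Lipschitz-continuous (nonlinear) operator, and ℓ ∈ V'. Then the operator A : V → V' defined by ⟨Au, v⟩ = a(u, v) + ⟨B u, v⟩ is strictly monotone and coercive, and the equation ⟨Au, v⟩ = ℓ(v) for all v ∈ V has a unique solution u ∈ V. -/
/-!
Through the Riesz isomorphism the problem becomes `A u = f` for the operator `A = a♯ + B` on `V`,
which is strongly monotone with constant `α` (coercivity of `a` plus monotonicity of `B`) and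
Lipschitz. Strict monotonicity and coercivity of `A` follow at once. Existence is Zarantonello's
argument: for `ρ = α / K²`, with `K` a Lipschitz constant of `A`, the map `u ↦ u - ρ (A u - f)` is a
contraction with constant `√(1 - (α / K)²)`, so Banach's fixed point theorem applies; uniqueness
is strict monotonicity again.
-/

open RealInnerProductSpace InnerProductSpace

section StronglyMonotone

variable {V : Type*} [NormedAddCommGroup V] [InnerProductSpace ℝ V] {A : V → V} {α : ℝ}

theorem inner_sub_pos_of_strongly_monotone (hα : 0 < α)
    (hA : ∀ u v, α * ‖u - v‖ ^ 2 ≤ ⟪A u - A v, u - v⟫) {u v : V} (huv : u ≠ v) :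
    0 < ⟪A u - A v, u - v⟫ :=
  (mul_pos hα (pow_pos (norm_pos_iff.mpr (sub_ne_zero.mpr huv)) 2)).trans_le (hA u v)

theorem injective_of_strongly_monotone (hα : 0 < α)
    (hA : ∀ u v, α * ‖u - v‖ ^ 2 ≤ ⟪A u - A v, u - v⟫) : Function.Injective A := by
  intro u v huv
  by_contra hne
  simpa [huv] using inner_sub_pos_of_strongly_monotone hα hA hne

theorem coercive_of_strongly_monotone (hα : 0 < α)
    (hA : ∀ u v, α * ‖u - v‖ ^ 2 ≤ ⟪A u - A v, u - v⟫) (C : ℝ) :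
    ∃ R, ∀ v, R ≤ ‖v‖ → C * ‖v‖ ≤ ⟪A v, v⟫ := by
  refine ⟨(C + ‖A 0‖) / α, fun v hv => ?_⟩
  have hmono : α * ‖v‖ ^ 2 ≤ ⟪A v, v⟫ - ⟪A 0, v⟫ := by
    simpa [inner_sub_left] using hA v 0
  have hA0 : -(‖A 0‖ * ‖v‖) ≤ ⟪A 0, v⟫ := neg_le_of_abs_le (abs_real_inner_le_norm _ _)
  have hlarge : C + ‖A 0‖ ≤ α * ‖v‖ := by rwa [div_le_iff₀' hα] at hv
  nlinarith [norm_nonneg v]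

theorem norm_sub_sub_smul_sq_le {K : NNReal} (hA : ∀ u v, α * ‖u - v‖ ^ 2 ≤ ⟪A u - A v, u - v⟫)
    (hlip : LipschitzWith K A) {ρ : ℝ} (hρ : 0 ≤ ρ) (u v : V) :
    ‖u - v - ρ • (A u - A v)‖ ^ 2 ≤ (1 - 2 * ρ * α + ρ ^ 2 * K ^ 2) * ‖u - v‖ ^ 2 := by
  have hA_lip : ‖A u - A v‖ ≤ K * ‖u - v‖ := by
    simpa only [dist_eq_norm] using hlip.dist_le_mul u v
  have hA_lip_sq : ‖A u - A v‖ ^ 2 ≤ K ^ 2 * ‖u - v‖ ^ 2 := by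
    rw [← mul_pow]; gcongr
  rw [norm_sub_sq_real, real_inner_smul_right, real_inner_comm, norm_smul, mul_pow,
    Real.norm_eq_abs, sq_abs]
  nlinarith [hA u v, mul_le_mul_of_nonneg_left hA_lip_sq (sq_nonneg ρ)]

theorem contractingWith_sub_smul_sub {K : NNReal} (hK : 0 < K) (hα : 0 < α)
    (hA : ∀ u v, α * ‖u - v‖ ^ 2 ≤ ⟪A u - A v, u - v⟫) (hlip : LipschitzWith K A) (f : V) :
    ContractingWith (√(1 - (α / K) ^ 2)).toNNReal fun u => u - (α / K ^ 2) • (A u - f) := by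
  have hK' : (0 : ℝ) < K := hK
  refine ⟨Real.toNNReal_lt_one.mpr ?_, LipschitzWith.of_dist_le' fun u v => ?_⟩
  · rw [Real.sqrt_lt' one_pos, one_pow]
    have : 0 < α / K := by positivity
    nlinarith
  have hstep := norm_sub_sub_smul_sq_le hA hlip (ρ := α / K ^ 2) (by positivity) u v
  -- with `ρ = α / K²` the factor `1 - 2ρα + ρ²K²` becomes `1 - (α / K)²`
  have hfactor : 1 - 2 * (α / K ^ 2) * α + (α / K ^ 2) ^ 2 * K ^ 2 = 1 - (α / K) ^ 2 := by
    field_simp; ring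
  have hdiff : u - (α / K ^ 2) • (A u - f) - (v - (α / K ^ 2) • (A v - f))
      = u - v - (α / K ^ 2) • (A u - A v) := by
    simp only [smul_sub]; abel
  rw [dist_eq_norm, dist_eq_norm, hdiff, ← Real.sqrt_sq (norm_nonneg (u - v - _)),
    ← Real.sqrt_sq (norm_nonneg (u - v)), ← Real.sqrt_mul' _ (sq_nonneg _)]
  exact Real.sqrt_le_sqrt (hfactor ▸ hstep)

theorem existsUnique_eq_of_strongly_monotone [CompleteSpace V] {K : NNReal} (hα : 0 < α)
    (hA : ∀ u v, α * ‖u - v‖ ^ 2 ≤ ⟪A u - A v, u - v⟫) (hlip : LipschitzWith K A) (f : V) :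
    ∃! u, A u = f := by
  have hT := contractingWith_sub_smul_sub (lt_of_lt_of_le one_pos (le_max_right K 1)) hα hA
    (hlip.weaken (le_max_left K 1)) f
  have : Nonempty V := ⟨0⟩
  have hfix := hT.fixedPoint_isFixedPt
  simp only [Function.IsFixedPt, sub_eq_self, smul_eq_zero, sub_eq_zero] at hfix
  have hsol := hfix.resolve_left (by positivity)
  exact ⟨_, hsol, fun u hu => injective_of_strongly_monotone hα hA (hu.trans hsol.symm)⟩

theorem strongly_monotone_continuousLinearMapOfBilin_add [CompleteSpace V]
    {a : V →L[ℝ] V →L[ℝ] ℝ} (hcoer : ∀ v, α * ‖v‖ ^ 2 ≤ a v v) {B : V → V}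
    (hmono : ∀ u v, 0 ≤ ⟪B u - B v, u - v⟫) (u v : V) :
    α * ‖u - v‖ ^ 2 ≤
      ⟪(continuousLinearMapOfBilin a u + B u) - (continuousLinearMapOfBilin a v + B v), u - v⟫ := by
  rw [add_sub_add_comm, ← map_sub, inner_add_left, continuousLinearMapOfBilin_apply]
  linarith [hcoer (u - v), hmono u v]

end StronglyMonotone

theorem minty_browder_penalized_general {V : Type*} [NormedAddCommGroup V]
    [InnerProductSpace ℝ V] [CompleteSpace V]
    (a : V → V → ℝ)
    (ha1 : ∀ v, IsLinearMap ℝ (fun u => a u v)) (ha2 : ∀ u, IsLinearMap ℝ (a u))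
    (M : ℝ) (hcont : ∀ u v, |a u v| ≤ M * ‖u‖ * ‖v‖)
    (α : ℝ) (hα : 0 < α) (hcoer : ∀ v, α * ‖v‖ ^ 2 ≤ a v v)
    (B : V → V)
    (hmono : ∀ u v, 0 ≤ (inner ℝ (B u - B v) (u - v) : ℝ))
    (L : NNReal) (hlip : LipschitzWith L B)
    (ℓ : V →L[ℝ] ℝ) :
    (∀ u v, u ≠ v →
      0 < (a u (u - v) + (inner ℝ (B u) (u - v) : ℝ))
            - (a v (u - v) + (inner ℝ (B v) (u - v) : ℝ))) ∧
    (∀ C : ℝ, ∃ R : ℝ, ∀ v, R ≤ ‖v‖ → C * ‖v‖ ≤ a v v + (inner ℝ (B v) v : ℝ)) ∧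
    (∃! u, ∀ v, a u v + (inner ℝ (B u) v : ℝ) = ℓ v) := by
  let aL : V →L[ℝ] V →L[ℝ] ℝ :=
    (LinearMap.mk₂ ℝ a (fun _ _ v => (ha1 v).map_add _ _) (fun _ _ v => (ha1 v).map_smul _ _)
      (fun u _ _ => (ha2 u).map_add _ _) (fun _ u _ => (ha2 u).map_smul _ _)).mkContinuous₂ M
      (by simpa only [LinearMap.mk₂_apply, Real.norm_eq_abs] using hcont)
  set A : V → V := fun u => continuousLinearMapOfBilin aL u + B u
  have hA_inner : ∀ u v, ⟪A u, v⟫ = a u v + ⟪B u, v⟫ := fun u v => by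
    simp [A, aL, inner_add_left]
  have hA_mono : ∀ u v, α * ‖u - v‖ ^ 2 ≤ ⟪A u - A v, u - v⟫ :=
    strongly_monotone_continuousLinearMapOfBilin_add (a := aL) hcoer hmono
  refine ⟨fun u v huv => ?_, fun C => ?_, ?_⟩
  · rw [← hA_inner, ← hA_inner, ← inner_sub_left]
    exact inner_sub_pos_of_strongly_monotone hα hA_mono huv
  · simpa only [hA_inner] using coercive_of_strongly_monotone hα hA_mono C
  · have hsol : ∀ u, (∀ v, a u v + ⟪B u, v⟫ = ℓ v) ↔ A u = (toDual ℝ V).symm ℓ := fun u => by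
      simp only [← hA_inner]
      exact ⟨fun h => ext_inner_right ℝ fun v => by rw [h, toDual_symm_apply],
        fun h v => by rw [h, toDual_symm_apply]⟩
    rw [existsUnique_congr hsol]
    exact existsUnique_eq_of_strongly_monotone hα hA_mono
      ((continuousLinearMapOfBilin aL).lipschitz.add hlip) _

/-- Minty–Browder setting: if `a` is a continuous coercive bilinear form, `B` a monotone,
bounded, Lipschitz operator, and `ℓ ∈ V'`, then `⟨Au, v⟩ = a(u,v) + ⟨Bu, v⟩` defines a
strictly monotone, coercive operator, and `⟨Au, v⟩ = ℓ(v)` for all `v` has a unique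
solution. -/
theorem minty_browder_penalized {V : Type*} [NormedAddCommGroup V]
    [InnerProductSpace ℝ V] [CompleteSpace V]
    (a : V → V → ℝ)
    (ha1 : ∀ v, IsLinearMap ℝ (fun u => a u v)) (ha2 : ∀ u, IsLinearMap ℝ (a u))
    (M : ℝ) (hcont : ∀ u v, |a u v| ≤ M * ‖u‖ * ‖v‖)
    (α : ℝ) (hα : 0 < α) (hcoer : ∀ v, α * ‖v‖ ^ 2 ≤ a v v)
    (B : V → V)
    (hmono : ∀ u v, 0 ≤ (inner ℝ (B u - B v) (u - v) : ℝ))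
    (hbdd : ∀ s : Set V, Bornology.IsBounded s → Bornology.IsBounded (B '' s))
    (L : NNReal) (hlip : LipschitzWith L B)
    (ℓ : V →L[ℝ] ℝ) :
    (∀ u v, u ≠ v →
      0 < (a u (u - v) + (inner ℝ (B u) (u - v) : ℝ))
            - (a v (u - v) + (inner ℝ (B v) (u - v) : ℝ))) ∧
    (∀ C : ℝ, ∃ R : ℝ, ∀ v, R ≤ ‖v‖ → C * ‖v‖ ≤ a v v + (inner ℝ (B v) v : ℝ)) ∧
    (∃! u, ∀ v, a u v + (inner ℝ (B u) v : ℝ) = ℓ v) :=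
  minty_browder_penalized_general a ha1 ha2 M hcont α hα hcoer B hmono L hlip ℓ
end

section
/- Let V be a Hilbert space, U ⊆ V nonempty closed convex, a : V × V → ℝ continuous, symmetric, coercive bilinear form with coercivity constant α > 0, ℓ ∈ V', and for κ > 0 let u_κ solve the penalized equation a(u_κ, v) + (1/κ)⟨P u_κ, v⟩ = ℓ(v) for all v ∈ V, where P : V → V' is monotone, vanishes on U (⟨Pv, w⟩ = 0 whenever v ∈ U), and satisfies ⟨Pv, v - u⟩ ≥ 0 for the solution u ∈ U of the variational inequality a(u, v - u) ≥ ℓ(v - u) (v ∈ U). Then α‖u_κ - u‖² ≤ ℓ(u_κ - u) - a(u, u_κ - u), and consequently if u_κ ⇀ u weakly in V then u_κ → u strongly in V. -/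
/-!
Testing the penalized equation with `u_κ - u` and dropping the nonnegative penalty term gives
`a(u_κ, u_κ - u) ≤ ℓ(u_κ - u)`; subtracting `a(u, u_κ - u)` and using coercivity yields the energy
estimate. Its right-hand side is the difference of two bounded linear functionals applied to
`u_κ - u`, so it tends to `0` under weak convergence, and the estimate forces `‖u_κ - u‖ → 0`.
-/

open Filter Topology

theorem penalized_energy_estimate {V : Type*} [NormedAddCommGroup V] [Module ℝ V]
    (a : V → V → ℝ) (ha : ∀ v, IsLinearMap ℝ (fun w => a w v))
    {α : ℝ} (hcoer : ∀ v, α * ‖v‖ ^ 2 ≤ a v v) (ℓ : V → ℝ) (P : V → V → ℝ)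
    {κ : ℝ} (hκ : 0 ≤ κ) {w u : V} (hw : ∀ v, a w v + (1 / κ) * P w v = ℓ v)
    (hPsign : 0 ≤ P w (w - u)) :
    α * ‖w - u‖ ^ 2 ≤ ℓ (w - u) - a u (w - u) := by
  have hpenalty : 0 ≤ (1 / κ) * P w (w - u) := mul_nonneg (by positivity) hPsign
  calc α * ‖w - u‖ ^ 2 ≤ a (w - u) (w - u) := hcoer _
    _ = a w (w - u) - a u (w - u) := (ha (w - u)).map_sub w u
    _ ≤ ℓ (w - u) - a u (w - u) := by linarith [hw (w - u)]

theorem tendsto_apply_of_weak_of_isLinearMap {V ι : Type*} [NormedAddCommGroup V]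
    [NormedSpace ℝ V] {f : V → ℝ} (hf : IsLinearMap ℝ f) {C : ℝ} (hC : ∀ v, |f v| ≤ C * ‖v‖)
    {l : Filter ι} {x : ι → V} {y : V}
    (hweak : ∀ φ : V →L[ℝ] ℝ, Tendsto (fun i => φ (x i)) l (𝓝 (φ y))) :
    Tendsto (fun i => f (x i)) l (𝓝 (f y)) :=
  hweak <| LinearMap.mkContinuous (IsLinearMap.mk' f hf) C fun v => by
    simpa [Real.norm_eq_abs] using hC v

theorem tendsto_of_sq_norm_sub_le {V ι : Type*} [NormedAddCommGroup V] {l : Filter ι}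
    {x : ι → V} {y : V} {g : ι → ℝ} {α : ℝ} (hα : 0 < α)
    (hbound : ∀ᶠ i in l, α * ‖x i - y‖ ^ 2 ≤ g i) (hg : Tendsto g l (𝓝 0)) :
    Tendsto x l (𝓝 y) := by
  rw [tendsto_iff_norm_sub_tendsto_zero]
  have hsqrt : Tendsto (fun i => Real.sqrt (g i / α)) l (𝓝 0) := by
    simpa using (hg.div_const α).sqrt
  refine squeeze_zero' (Eventually.of_forall fun i => norm_nonneg _) ?_ hsqrt
  filter_upwards [hbound] with i hi
  refine Real.le_sqrt_of_sq_le ?_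
  rw [le_div_iff₀ hα]
  linarith

theorem penalty_strong_convergence_general {V : Type*} [NormedAddCommGroup V]
    [InnerProductSpace ℝ V]
    (a : V → V → ℝ)
    (ha1 : ∀ v, IsLinearMap ℝ (fun u => a u v)) (ha2 : ∀ u, IsLinearMap ℝ (a u))
    (M : ℝ) (hcont : ∀ u v, |a u v| ≤ M * ‖u‖ * ‖v‖)
    (α : ℝ) (hα : 0 < α) (hcoer : ∀ v, α * ‖v‖ ^ 2 ≤ a v v)
    (ℓ : V →L[ℝ] ℝ)
    (P : V → V → ℝ)
    (u : V)
    (hPsign : ∀ v, 0 ≤ P v (v - u))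
    (uk : ℝ → V)
    (heq : ∀ κ, 0 < κ → ∀ v, a (uk κ) v + (1 / κ) * P (uk κ) v = ℓ v) :
    (∀ κ, 0 < κ → α * ‖uk κ - u‖ ^ 2 ≤ ℓ (uk κ - u) - a u (uk κ - u)) ∧
    ((∀ φ : V →L[ℝ] ℝ,
        Tendsto (fun κ => φ (uk κ)) (nhdsWithin 0 (Set.Ioi 0)) (nhds (φ u))) →
      Tendsto uk (nhdsWithin 0 (Set.Ioi 0)) (nhds u)) := by
  have hestimate : ∀ κ, 0 < κ → α * ‖uk κ - u‖ ^ 2 ≤ ℓ (uk κ - u) - a u (uk κ - u) :=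
    fun κ hκ => penalized_energy_estimate a ha1 hcoer ℓ P hκ.le (heq κ hκ) (hPsign (uk κ))
  refine ⟨hestimate, fun hweak => ?_⟩
  refine tendsto_of_sq_norm_sub_le hα (eventually_mem_nhdsWithin.mono hestimate) ?_
  have hℓ := (hweak ℓ).sub_const (ℓ u)
  have ha := (tendsto_apply_of_weak_of_isLinearMap (ha2 u) (hcont u) hweak).sub_const (a u u)
  simpa only [map_sub, (ha2 u).map_sub, sub_self] using hℓ.sub ha

/-- Penalty-method energy estimate and strong convergence: if `u_κ` solves the
penalized equation `a(u_κ, v) + (1/κ)⟨P u_κ, v⟩ = ℓ(v)` with `P` monotone, vanishing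
on `U`, and `⟨Pv, v-u⟩ ≥ 0` for the solution `u` of the variational inequality, then
`α‖u_κ - u‖² ≤ ℓ(u_κ - u) - a(u, u_κ - u)`, and if `u_κ ⇀ u` weakly then `u_κ → u`
strongly. -/
theorem penalty_strong_convergence {V : Type*} [NormedAddCommGroup V]
    [InnerProductSpace ℝ V] [CompleteSpace V]
    (U : Set V) (hUne : U.Nonempty) (hUcl : IsClosed U) (hUcv : Convex ℝ U)
    (a : V → V → ℝ)
    (ha1 : ∀ v, IsLinearMap ℝ (fun u => a u v)) (ha2 : ∀ u, IsLinearMap ℝ (a u))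
    (hsymm : ∀ u v, a u v = a v u)
    (M : ℝ) (hcont : ∀ u v, |a u v| ≤ M * ‖u‖ * ‖v‖)
    (α : ℝ) (hα : 0 < α) (hcoer : ∀ v, α * ‖v‖ ^ 2 ≤ a v v)
    (ℓ : V →L[ℝ] ℝ)
    (P : V → V → ℝ) (hPlin : ∀ v, IsLinearMap ℝ (P v))
    (hPmono : ∀ v w, 0 ≤ P v (v - w) - P w (v - w))
    (hPU : ∀ v ∈ U, ∀ w, P v w = 0)
    (u : V) (hu : u ∈ U)
    (huVI : ∀ v ∈ U, ℓ (v - u) ≤ a u (v - u))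
    (hPsign : ∀ v, 0 ≤ P v (v - u))
    (uk : ℝ → V)
    (heq : ∀ κ, 0 < κ → ∀ v, a (uk κ) v + (1 / κ) * P (uk κ) v = ℓ v) :
    (∀ κ, 0 < κ → α * ‖uk κ - u‖ ^ 2 ≤ ℓ (uk κ - u) - a u (uk κ - u)) ∧
    ((∀ φ : V →L[ℝ] ℝ,
        Tendsto (fun κ => φ (uk κ)) (nhdsWithin 0 (Set.Ioi 0)) (nhds (φ u))) →
      Tendsto uk (nhdsWithin 0 (Set.Ioi 0)) (nhds u)) :=
  penalty_strong_convergence_general a ha1 ha2 M hcont α hα hcoer ℓ P u hPsign uk heq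
end

section
/- Let λ ≥ 0 and μ > 0, and let (a^{αβ}) be a symmetric positive-definite 2×2 matrix. Define A^{αβστ} = λ a^{αβ} a^{στ} + μ(a^{ασ} a^{βτ} + a^{ατ} a^{βσ}), A^{αβ33} = λ a^{αβ}, A^{α3σ3} = μ a^{ασ}, A^{3333} = λ + 2μ, A^{αβσ3} = A^{α333} = 0 (extended by the symmetries A^{ijkl} = A^{jikl} = A^{klij}). Then there exists C₀ > 0 such that Σ_{i,j} |t_{ij}|² ≤ C₀ A^{ijkl} t_{kl} t_{ij} for all symmetric 3×3 matrices (t_{ij}). -/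
/-!
Write `g` for the extension of `a` by `g^{α3} = 0`, `g^{33} = 1`; it is positive definite. For
symmetric `t` the two `μ`-terms of `A^{ijkl} t_{kl} t_{ij}` coincide, so the form equals
`λ (g^{ij} t_{ij})² + 2μ vec(t) ⬝ (g ⊗ g) vec(t)`. The first term is nonnegative, and the Kronecker
square `g ⊗ g` is positive definite, so by compactness of the unit sphere its quadratic form
dominates a positive multiple of `Σ |t_{ij}|²`.
-/

/-- Extension of a 2×2 matrix `(a^{αβ})` to a 3×3 matrix with `g^{α3} = g^{3α} = 0`
and `g^{33} = 1`. -/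
def gext (a : Fin 2 → Fin 2 → ℝ) : Fin 3 → Fin 3 → ℝ := fun i j =>
  if hi : (i : ℕ) < 2 then
    (if hj : (j : ℕ) < 2 then a ⟨i, hi⟩ ⟨j, hj⟩ else 0)
  else (if (j : ℕ) < 2 then 0 else 1)

open Matrix
open scoped Kronecker

section

variable {ι : Type*} [Fintype ι]

theorem Matrix.PosDef.exists_dotProduct_self_le_mul {M : Matrix ι ι ℝ} (hM : M.PosDef) :
    ∃ C > 0, ∀ x : ι → ℝ, x ⬝ᵥ x ≤ C * (x ⬝ᵥ M *ᵥ x) := by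
  set f : (ι → ℝ) → ℝ := fun x => x ⬝ᵥ x / (x ⬝ᵥ M *ᵥ x)
  have hform_pos {x : ι → ℝ} (hx : x ≠ 0) : 0 < x ⬝ᵥ M *ᵥ x := by
    simpa using hM.dotProduct_mulVec_pos hx
  have hf : ContinuousOn f (Metric.sphere 0 1) :=
    ContinuousOn.div (by fun_prop) (by fun_prop) fun x hx =>
      (hform_pos (ne_zero_of_mem_unit_sphere ⟨x, hx⟩)).ne'
  obtain ⟨C, hC⟩ := (isCompact_sphere (0 : ι → ℝ) 1).exists_bound_of_continuousOn hf
  refine ⟨max C 1, by positivity, fun x => ?_⟩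
  rcases eq_or_ne x 0 with rfl | hx
  · simp
  have hscale : f (‖x‖⁻¹ • x) = f x := by
    have : ‖x‖ ≠ 0 := norm_ne_zero_iff.mpr hx
    simp only [f, smul_dotProduct, dotProduct_smul, mulVec_smul, smul_eq_mul]
    field_simp
  have hbound := hC (‖x‖⁻¹ • x) (by simp [norm_smul, hx])
  rw [hscale, Real.norm_eq_abs] at hbound
  rw [← div_le_iff₀ (hform_pos hx)]
  exact (le_abs_self _).trans (hbound.trans (le_max_left _ _))

theorem Matrix.vec_dotProduct_kronecker_mulVec_vec (g t : Matrix ι ι ℝ) :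
    vec t ⬝ᵥ (g ⊗ₖ g) *ᵥ vec t = ∑ i, ∑ j, ∑ k, ∑ l, g i k * g j l * t k l * t i j := by
  simp only [dotProduct, mulVec, Fintype.sum_prod_type, vec, kronecker_apply, Finset.mul_sum]
  rw [Finset.sum_comm]
  refine Finset.sum_congr rfl fun i _ => Finset.sum_congr rfl fun j _ => ?_
  rw [Finset.sum_comm]
  refine Finset.sum_congr rfl fun k _ => Finset.sum_congr rfl fun l _ => ?_
  ring

theorem isotropic_elasticity_form_eq (g : Matrix ι ι ℝ) (lam mu : ℝ) {t : Matrix ι ι ℝ}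
    (ht : t.IsSymm) :
    ∑ i, ∑ j, ∑ k, ∑ l,
        (lam * g i j * g k l + mu * (g i k * g j l + g i l * g j k)) * t k l * t i j
      = lam * (∑ i, ∑ j, g i j * t i j) ^ 2 + 2 * mu * (vec t ⬝ᵥ (g ⊗ₖ g) *ᵥ vec t) := by
  have hswap : ∀ i j, ∑ k, ∑ l, g i l * g j k * t k l * t i j
      = ∑ k, ∑ l, g i k * g j l * t k l * t i j := fun i j => by
    rw [Finset.sum_comm]
    simp only [ht.apply]
  have hsq : (∑ i, ∑ j, g i j * t i j) ^ 2
      = ∑ i, ∑ j, ∑ k, ∑ l, g i j * t i j * (g k l * t k l) := by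
    simp_rw [sq, Finset.sum_mul, Finset.mul_sum]
  calc _ = lam * ∑ i, ∑ j, ∑ k, ∑ l, g i j * t i j * (g k l * t k l)
        + mu * ∑ i, ∑ j, ∑ k, ∑ l, g i k * g j l * t k l * t i j
        + mu * ∑ i, ∑ j, ∑ k, ∑ l, g i l * g j k * t k l * t i j := by
        simp only [Finset.mul_sum, ← Finset.sum_add_distrib]
        refine Finset.sum_congr rfl fun i _ => Finset.sum_congr rfl fun j _ =>
          Finset.sum_congr rfl fun k _ => Finset.sum_congr rfl fun l _ => ?_
        ring
    _ = _ := by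
        simp only [hswap, hsq, vec_dotProduct_kronecker_mulVec_vec]
        ring

theorem exists_sum_sq_le_mul_isotropic_elasticity_form {g : Matrix ι ι ℝ} (hg : g.PosDef)
    {lam mu : ℝ} (hlam : 0 ≤ lam) (hmu : 0 < mu) :
    ∃ C₀ > (0 : ℝ), ∀ t : Matrix ι ι ℝ, t.IsSymm →
      ∑ i, ∑ j, t i j ^ 2 ≤
        C₀ * ∑ i, ∑ j, ∑ k, ∑ l,
          (lam * g i j * g k l + mu * (g i k * g j l + g i l * g j k)) * t k l * t i j := by
  obtain ⟨C, hC, hcoercive⟩ := (hg.kronecker hg).exists_dotProduct_self_le_mul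
  refine ⟨C / (2 * mu), by positivity, fun t ht => ?_⟩
  have hsum_sq : ∑ i, ∑ j, t i j ^ 2 = vec t ⬝ᵥ vec t := by
    simp only [dotProduct, Fintype.sum_prod_type, vec, sq]
    exact Finset.sum_comm
  have htrace_term : 0 ≤ C / (2 * mu) * (lam * (∑ i, ∑ j, g i j * t i j) ^ 2) := by positivity
  have hcancel : C / (2 * mu) * (2 * mu * (vec t ⬝ᵥ (g ⊗ₖ g) *ᵥ vec t))
      = C * (vec t ⬝ᵥ (g ⊗ₖ g) *ᵥ vec t) := by field_simp
  rw [isotropic_elasticity_form_eq g lam mu ht, hsum_sq, mul_add]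
  linarith [hcoercive (vec t)]

end

theorem dotProduct_gext_mulVec (a : Fin 2 → Fin 2 → ℝ) (x : Fin 3 → ℝ) :
    x ⬝ᵥ gext a *ᵥ x = ∑ α, ∑ β, a α β * Fin.init x α * Fin.init x β + x 2 ^ 2 := by
  simp only [dotProduct, mulVec, Fin.sum_univ_three, Fin.sum_univ_two, Fin.init]
  dsimp +decide [gext]
  ring

theorem posDef_gext {a : Fin 2 → Fin 2 → ℝ} (hsym : ∀ α β, a α β = a β α)
    (hpos : ∀ t : Fin 2 → ℝ, t ≠ 0 → 0 < ∑ α, ∑ β, a α β * t α * t β) :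
    Matrix.PosDef (gext a) := by
  refine .of_dotProduct_mulVec_pos (.ext fun i j => ?_) fun x hx => ?_
  · fin_cases i <;> fin_cases j <;> simp [gext, hsym]
  rw [star_trivial, dotProduct_gext_mulVec]
  by_cases hinit : Fin.init x = 0
  · have hx2 : x 2 ≠ 0 := by
      contrapose! hx
      ext i
      fin_cases i
      exacts [congrFun hinit 0, congrFun hinit 1, hx]
    simp only [hinit, Pi.zero_apply, mul_zero, Finset.sum_const_zero, zero_add]
    positivity
  · exact add_pos_of_pos_of_nonneg (hpos _ hinit) (sq_nonneg _)

/-- Uniform positive-definiteness of the three-dimensional elasticity tensor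
`A^{ijkl} = λ g^{ij} g^{kl} + μ (g^{ik} g^{jl} + g^{il} g^{jk})` (whose entries are
`A^{αβστ} = λa^{αβ}a^{στ} + μ(a^{ασ}a^{βτ} + a^{ατ}a^{βσ})`, `A^{αβ33} = λa^{αβ}`,
`A^{α3σ3} = μa^{ασ}`, `A^{3333} = λ + 2μ`, `A^{αβσ3} = A^{α333} = 0`): there is
`C₀ > 0` with `Σ|t_{ij}|² ≤ C₀ A^{ijkl} t_{kl} t_{ij}` for all symmetric `(t_{ij})`. -/
theorem elasticity_tensor_positive_definite
    (a : Fin 2 → Fin 2 → ℝ) (hsym : ∀ α β, a α β = a β α)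
    (hpos : ∀ t : Fin 2 → ℝ, t ≠ 0 → 0 < ∑ α, ∑ β, a α β * t α * t β)
    (lam mu : ℝ) (hlam : 0 ≤ lam) (hmu : 0 < mu) :
    ∃ C₀ > (0 : ℝ), ∀ t : Fin 3 → Fin 3 → ℝ, (∀ i j, t i j = t j i) →
      ∑ i, ∑ j, (t i j) ^ 2 ≤
        C₀ * ∑ i, ∑ j, ∑ k, ∑ l,
          (lam * gext a i j * gext a k l
            + mu * (gext a i k * gext a j l + gext a i l * gext a j k))
            * t k l * t i j := by
  obtain ⟨C₀, hC₀, hbound⟩ :=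
    exists_sum_sq_le_mul_isotropic_elasticity_form (posDef_gext hsym hpos) hlam hmu
  exact ⟨C₀, hC₀, fun t ht => hbound t (IsSymm.ext fun i j => (ht i j).symm)⟩
end

section
/- Let λ ≥ 0, μ > 0 and (a^{αβ}) a symmetric positive-definite 2×2 matrix. Define the two-dimensional elasticity tensor a^{αβστ} = (4λμ/(λ+2μ)) a^{αβ} a^{στ} + 2μ(a^{ασ} a^{βτ} + a^{ατ} a^{βσ}). Then there exists c > 0 such that Σ_{α,β} |t_{αβ}|² ≤ c · a^{αβστ} t_{στ} t_{αβ} for all symmetric 2×2 matrices (t_{αβ}). -/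
/-!
Put `L = 4λμ/(λ+2μ) ≥ 0`. On symmetric `t` the form equals
`L (a^{αβ} t_{αβ})² + 4μ a^{ασ} a^{βτ} t_{στ} t_{αβ}`, and the last sum is the quadratic form of the
Kronecker square `A ⊗ A` evaluated at `t`. If `A ≥ m·I` with `m ≥ 0`, then `A ⊗ A ≥ m²·I`, so the
form is at least `4μm² |t|²`. For a positive-definite `2 × 2` matrix one may take
`m = det A / tr A`: the matrix `A - m·I` has nonnegative trace and determinant `m²`.
-/

open Matrix Finset
open scoped Kronecker

namespace Matrix

variable {ι : Type*} [Fintype ι] [DecidableEq ι]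

theorem PosSemidef.kronecker_self_sub_sq_smul_one {A : Matrix ι ι ℝ} {m : ℝ}
    (hA : (A - m • 1).PosSemidef) (hm : 0 ≤ m) : (A ⊗ₖ A - m ^ 2 • 1).PosSemidef := by
  set P := A - m • 1
  have hA_eq : A = P + m • 1 := by simp [P]
  have hexpand : A ⊗ₖ A - m ^ 2 • 1 = P ⊗ₖ P + m • (P ⊗ₖ 1 + 1 ⊗ₖ P) := by
    rw [hA_eq, add_kronecker, kronecker_add, kronecker_add, smul_kronecker, kronecker_smul,
      kronecker_smul, smul_kronecker, one_kronecker_one, smul_smul, smul_add, ← sq]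
    abel
  rw [hexpand]
  exact (hA.kronecker hA).add (((hA.kronecker .one).add (PosSemidef.one.kronecker hA)).smul hm)

theorem sq_mul_sum_sq_le_sum_mul_mul {A : Matrix ι ι ℝ} {m : ℝ}
    (hA : (A - m • 1).PosSemidef) (hm : 0 ≤ m) (t : ι → ι → ℝ) :
    m ^ 2 * ∑ α, ∑ β, t α β ^ 2 ≤ ∑ α, ∑ β, ∑ σ, ∑ τ, A α σ * A β τ * t σ τ * t α β := by
  have h := (hA.kronecker_self_sub_sq_smul_one hm).dotProduct_mulVec_nonneg
    (fun p : ι × ι => t p.1 p.2)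
  rw [sub_mulVec, smul_mulVec, one_mulVec, dotProduct_sub, dotProduct_smul, sub_nonneg,
    star_trivial] at h
  simp only [smul_eq_mul, dotProduct, mulVec, kroneckerMap_apply, Fintype.sum_prod_type] at h
  simpa only [sq, mul_sum, mul_comm (t _ _) (A _ _ * A _ _ * t _ _)] using h

theorem PosSemidef.of_fin_two {M : Matrix (Fin 2) (Fin 2) ℝ} (hM : M.IsHermitian)
    (htr : 0 ≤ M.trace) (hdet : 0 ≤ M.det) : M.PosSemidef := by
  have hsymm : M 1 0 = M 0 1 := by simpa using hM.apply 0 1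
  rw [trace_fin_two] at htr
  rw [det_fin_two, hsymm] at hdet
  refine .of_dotProduct_mulVec_nonneg hM fun x => ?_
  simp only [dotProduct, mulVec, Fin.sum_univ_two, star_trivial, hsymm]
  rcases htr.eq_or_lt with htr0 | htr_pos
  · have hp : M 0 0 = 0 := by nlinarith [sq_nonneg (M 0 1), sq_nonneg (M 0 0)]
    have hq : M 0 1 = 0 := by nlinarith [sq_nonneg (M 0 1)]
    have hr : M 1 1 = 0 := by linarith
    simp [hp, hq, hr]
  · refine nonneg_of_mul_nonneg_right ?_ htr_pos
    nlinarith [sq_nonneg (M 0 0 * x 0 + M 0 1 * x 1), sq_nonneg (M 1 1 * x 1 + M 0 1 * x 0),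
      mul_nonneg hdet (add_nonneg (sq_nonneg (x 0)) (sq_nonneg (x 1)))]

theorem PosDef.posSemidef_sub_det_div_trace_smul_one {A : Matrix (Fin 2) (Fin 2) ℝ}
    (hA : A.PosDef) : (A - (A.det / A.trace) • 1).PosSemidef := by
  set m := A.det / A.trace
  have hsymm : A 1 0 = A 0 1 := by simpa using hA.isHermitian.apply 0 1
  have htr := hA.trace_pos
  have hmtr : m * A.trace = A.det := div_mul_cancel₀ _ htr.ne'
  rw [trace_fin_two] at htr hmtr
  rw [det_fin_two, hsymm] at hmtr
  refine .of_fin_two (hA.isHermitian.sub (isHermitian_one.smul (IsSelfAdjoint.all m))) ?_ ?_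
  · rw [trace_fin_two]
    simp only [sub_apply, smul_apply, one_apply_eq, smul_eq_mul]
    refine nonneg_of_mul_nonneg_right ?_ htr
    nlinarith [sq_nonneg (A 0 0), sq_nonneg (A 1 1), sq_nonneg (A 0 1)]
  · rw [det_fin_two]
    simp only [sub_apply, smul_apply, one_apply_eq, one_apply_ne zero_ne_one,
      one_apply_ne one_ne_zero, smul_eq_mul, mul_one, mul_zero, sub_zero, hsymm]
    nlinarith [sq_nonneg m]

end Matrix

section

variable {ι : Type*} [Fintype ι]

theorem sum_elasticity_form_eq (a t : ι → ι → ℝ) (L μ : ℝ) (ht : ∀ α β, t α β = t β α) :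
    ∑ α, ∑ β, ∑ σ, ∑ τ, (L * a α β * a σ τ + 2 * μ * (a α σ * a β τ + a α τ * a β σ))
        * t σ τ * t α β =
      L * (∑ α, ∑ β, a α β * t α β) ^ 2
        + 4 * μ * ∑ α, ∑ β, ∑ σ, ∑ τ, a α σ * a β τ * t σ τ * t α β := by
  have hsq : (∑ α, ∑ β, a α β * t α β) ^ 2
      = ∑ α, ∑ β, ∑ σ, ∑ τ, a α β * a σ τ * t σ τ * t α β := by
    simp only [sq, sum_mul, mul_sum]
    exact sum_congr rfl fun _ _ => sum_congr rfl fun _ _ => sum_congr rfl fun _ _ =>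
      sum_congr rfl fun _ _ => by ring
  have hswap : ∑ α, ∑ β, ∑ σ, ∑ τ, a α τ * a β σ * t σ τ * t α β
      = ∑ α, ∑ β, ∑ σ, ∑ τ, a α σ * a β τ * t σ τ * t α β := by
    refine sum_congr rfl fun α _ => sum_congr rfl fun β _ => ?_
    rw [sum_comm]
    exact sum_congr rfl fun σ _ => sum_congr rfl fun τ _ => by rw [ht τ σ]
  calc _ = ∑ α, ∑ β, ∑ σ, ∑ τ, (L * (a α β * a σ τ * t σ τ * t α β)
          + 2 * μ * (a α σ * a β τ * t σ τ * t α β) + 2 * μ * (a α τ * a β σ * t σ τ * t α β)) :=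
        sum_congr rfl fun _ _ => sum_congr rfl fun _ _ => sum_congr rfl fun _ _ =>
          sum_congr rfl fun _ _ => by ring
    _ = _ := by
        simp only [sum_add_distrib, ← mul_sum]
        rw [hsq, hswap]
        ring

theorem sum_sq_le_elasticity_form [DecidableEq ι] {a : Matrix ι ι ℝ} {m L μ : ℝ}
    (ha : (a - m • 1).PosSemidef) (hm : 0 ≤ m) (hL : 0 ≤ L) (hμ : 0 ≤ μ)
    (t : ι → ι → ℝ) (ht : ∀ α β, t α β = t β α) :
    4 * μ * m ^ 2 * ∑ α, ∑ β, t α β ^ 2 ≤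
      ∑ α, ∑ β, ∑ σ, ∑ τ, (L * a α β * a σ τ + 2 * μ * (a α σ * a β τ + a α τ * a β σ))
        * t σ τ * t α β := by
  rw [sum_elasticity_form_eq a t L μ ht, mul_assoc]
  have := mul_le_mul_of_nonneg_left (sq_mul_sum_sq_le_sum_mul_mul ha hm t)
    (by positivity : (0 : ℝ) ≤ 4 * μ)
  nlinarith [mul_nonneg hL (sq_nonneg (∑ α, ∑ β, a α β * t α β))]

end

/-- Uniform positive-definiteness of the two-dimensional shell elasticity tensor
`a^{αβστ} = (4λμ/(λ+2μ)) a^{αβ} a^{στ} + 2μ(a^{ασ}a^{βτ} + a^{ατ}a^{βσ})`. -/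
theorem two_dim_elasticity_tensor_positive_definite
    (a : Fin 2 → Fin 2 → ℝ) (hsym : ∀ α β, a α β = a β α)
    (hpos : ∀ t : Fin 2 → ℝ, t ≠ 0 → 0 < ∑ α, ∑ β, a α β * t α * t β)
    (lam mu : ℝ) (hlam : 0 ≤ lam) (hmu : 0 < mu) :
    ∃ c > (0 : ℝ), ∀ t : Fin 2 → Fin 2 → ℝ, (∀ α β, t α β = t β α) →
      ∑ α, ∑ β, (t α β) ^ 2 ≤
        c * ∑ α, ∑ β, ∑ σ, ∑ τ,
          ((4 * lam * mu / (lam + 2 * mu)) * a α β * a σ τ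
            + 2 * mu * (a α σ * a β τ + a α τ * a β σ))
            * t σ τ * t α β := by
  have ha : Matrix.PosDef a := by
    refine .of_dotProduct_mulVec_pos (funext₂ fun α β => hsym β α) fun x hx => ?_
    simpa only [dotProduct, mulVec, star_trivial, mul_sum, mul_comm, mul_left_comm] using hpos x hx
  set m := Matrix.det a / Matrix.trace a
  have hm : 0 < m := div_pos ha.det_pos ha.trace_pos
  refine ⟨1 / (4 * mu * m ^ 2), by positivity, fun t ht => ?_⟩
  rw [div_mul_eq_mul_div, one_mul, le_div_iff₀ (by positivity), mul_comm]
  exact sum_sq_le_elasticity_form ha.posSemidef_sub_det_div_trace_smul_one hm.le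
    (by positivity) hmu.le t ht
end
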